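/- For every trace t₁ and t₂ and every substitution ρ : Name → Name, if t₁ ⋉ t₂ then ρ(t₁) ⋉ ρ(t₂), where ρ acts on a trace by substituting ρ(n) for each occurrence of each name n (in events, conditions, and inside critical segments), assuming the entailment relation on conditions is preserved by substitution (c₂ ⊨_c c₁ implies ρ(c₂) ⊨_c ρ(c₁)). -/

import Mathlib

/- Tokens, traces, the unwrap rewriting relation and the trace simulation
relation of "Required Behavior of Sequence Diagrams: Semantics and
Conformance" (Lu & Kim). -/

namespace SDPaper

/-- An atom is an event or a guard condition. -/
inductive Atom (E C : Type) : Type where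
  | evt : E → Atom E C
  | cnd : C → Atom E C

/-- A token is an event, a condition, or a critical segment wrapping a finite
sequence of events and conditions. -/
inductive Tok (E C : Type) : Type where
  | atom : Atom E C → Tok E C
  | crit : List (Atom E C) → Tok E C

/-- A trace is a finite sequence of tokens. -/
abbrev Trace (E C : Type) : Type := List (Tok E C)

/-- The token carrying a guard condition. -/
def condTok {E C : Type} (c : C) : Tok E C := Tok.atom (Atom.cnd c)

/-- The token carrying an event. -/
def evtTok {E C : Type} (e : E) : Tok E C := Tok.atom (Atom.evt e)

/-- The unwrap rewriting relation `↷` on traces: one step exposes one critical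
segment, `α⟨σ⟩β ↷ ασβ`. -/
inductive Unwrap {E C : Type} : Trace E C → Trace E C → Prop where
  | step (α β : Trace E C) (σ : List (Atom E C)) :
      Unwrap (α ++ Tok.crit σ :: β) (α ++ σ.map Tok.atom ++ β)

/-- The reflexive–transitive closure `↷*` of the unwrap relation. -/
def Unwraps {E C : Type} : Trace E C → Trace E C → Prop :=
  Relation.ReflTransGen Unwrap

section Sim

variable {E C : Type} (ent : C → C → Prop)

/-- Simulation on atoms: `c₁ ⋉ c₂` if `c₂ ⊨_c c₁`; `e₁ ⋉ e₂` if `e₁ = e₂`.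
Here `ent c₁ c₂` denotes the entailment `c₁ ⊨_c c₂`. -/
inductive AtomSim : Atom E C → Atom E C → Prop where
  | evt (e : E) : AtomSim (Atom.evt e) (Atom.evt e)
  | cnd {c₁ c₂ : C} : ent c₂ c₁ → AtomSim (Atom.cnd c₁) (Atom.cnd c₂)

/-- Simulation on sequences of events and conditions (used inside critical
segments, which contain no nested critical segments): there is a strictly
increasing reindexing function `η` such that corresponding atoms are similar
and every position outside the image of `η` carries a condition. -/
def SeqSim (α γ : List (Atom E C)) : Prop :=
  ∃ η : Fin α.length → Fin γ.length, StrictMono η ∧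
    (∀ i : Fin α.length, AtomSim ent (α.get i) (γ.get (η i))) ∧
    (∀ j : Fin γ.length, (∀ i, η i ≠ j) → ∃ c : C, γ.get j = Atom.cnd c)

/-- Simulation on tokens: a critical segment can only be simulated by a
critical segment, `⟨α⟩ ⋉ ⟨γ⟩` if `α ⋉ γ`. -/
inductive TokSim : Tok E C → Tok E C → Prop where
  | atom {a b : Atom E C} : AtomSim ent a b → TokSim (Tok.atom a) (Tok.atom b)
  | crit {α γ : List (Atom E C)} : SeqSim ent α γ → TokSim (Tok.crit α) (Tok.crit γ)

/-- The trace simulation relation `α ⋉ γ`: there are a trace `β` with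
`α ↷* β` and a strictly increasing `η : dom(β) → dom(γ)` such that
`β(i) ⋉ γ(η(i))` for every `i` and every position of `γ` outside the image of
`η` carries a condition. -/
def TraceSim (α γ : Trace E C) : Prop :=
  ∃ β : Trace E C, Unwraps α β ∧
    ∃ η : Fin β.length → Fin γ.length, StrictMono η ∧
      (∀ i : Fin β.length, TokSim ent (β.get i) (γ.get (η i))) ∧
      (∀ j : Fin γ.length, (∀ i, η i ≠ j) → ∃ c : C, γ.get j = condTok c)

end Sim

end SDPaper

namespace SDPaper

/-- An event over a denumerable set `Name` of names: a sending (`send = true`)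
or receiving (`send = false`) event of a message with a name, a sender, a
receiver and a parameter list of names. -/
structure Event (Name : Type) : Type where
  send : Bool
  msg : Name
  sender : Name
  receiver : Name
  params : List Name

/-- The action of a substitution `ρ : Name → Name` on an event. -/
def Event.rename {Name : Type} (ρ : Name → Name) (e : Event Name) : Event Name :=
  ⟨e.send, ρ e.msg, ρ e.sender, ρ e.receiver, e.params.map ρ⟩

/-- The action of a substitution `ρ : Name → Name` on an event or a condition,
where `cr` is the action of substitutions on guard conditions. -/
def atomRename {Name C : Type} (cr : (Name → Name) → C → C) (ρ : Name → Name) :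
    Atom (Event Name) C → Atom (Event Name) C
  | Atom.evt e => Atom.evt (e.rename ρ)
  | Atom.cnd c => Atom.cnd (cr ρ c)

/-- The action of a substitution on a token (acting inside critical
segments as well). -/
def tokRename {Name C : Type} (cr : (Name → Name) → C → C) (ρ : Name → Name) :
    Tok (Event Name) C → Tok (Event Name) C
  | Tok.atom a => Tok.atom (atomRename cr ρ a)
  | Tok.crit σ => Tok.crit (σ.map (atomRename cr ρ))

/-- The action `ρ(t)` of a substitution on a trace: substitute `ρ(n)` for each
occurrence of each name `n` in events, conditions and inside critical
segments. -/
def traceRename {Name C : Type} (cr : (Name → Name) → C → C) (ρ : Name → Name)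
    (t : Trace (Event Name) C) : Trace (Event Name) C :=
  t.map (tokRename cr ρ)

/-- The reindexing condition shared by `SeqSim` and `TraceSim`, abstracted over the
relation `R` on matched entries and the predicate `P` on skipped ones. -/
def Embeds {α β : Type} (R : α → β → Prop) (P : β → Prop) (l : List α) (m : List β) : Prop :=
  ∃ η : Fin l.length → Fin m.length, StrictMono η ∧
    (∀ i, R (l.get i) (m.get (η i))) ∧ ∀ j, (∀ i, η i ≠ j) → P (m.get j)

theorem Embeds.map {α β α' β' : Type} {R : α → β → Prop} {R' : α' → β' → Prop}
    {P : β → Prop} {P' : β' → Prop} (f : α → α') (g : β → β')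
    (hR : ∀ {a b}, R a b → R' (f a) (g b)) (hP : ∀ {b}, P b → P' (g b))
    {l : List α} {m : List β} (h : Embeds R P l m) :
    Embeds R' P' (l.map f) (m.map g) := by
  obtain ⟨η, hmono, hrel, hmiss⟩ := h
  have hl : (l.map f).length = l.length := List.length_map _
  have hm : (m.map g).length = m.length := List.length_map _
  refine ⟨fun i => (η (i.cast hl)).cast hm.symm, ?_, ?_, ?_⟩
  · intro i j hij
    exact hmono (show i.cast hl < j.cast hl from hij)
  · intro i
    simpa only [List.get_eq_getElem, List.getElem_map, Fin.val_cast] using hR (hrel (i.cast hl))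
  · intro j hj
    have hmissed : ∀ i, η i ≠ j.cast hm := fun i hi =>
      hj (i.cast hl.symm) (Fin.ext (by simpa using congrArg Fin.val hi))
    simpa only [List.get_eq_getElem, List.getElem_map, Fin.val_cast] using
      hP (hmiss (j.cast hm) hmissed)

theorem seqSim_iff_embeds {E C : Type} (ent : C → C → Prop) (α γ : List (Atom E C)) :
    SeqSim ent α γ ↔ Embeds (AtomSim ent) (fun a => ∃ c, a = Atom.cnd c) α γ :=
  Iff.rfl

theorem traceSim_iff_embeds {E C : Type} (ent : C → C → Prop) (α γ : Trace E C) :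
    TraceSim ent α γ ↔
      ∃ β, Unwraps α β ∧ Embeds (TokSim ent) (fun t => ∃ c, t = condTok c) β γ :=
  Iff.rfl

section Rename

variable {Name C : Type} (cr : (Name → Name) → C → C) (ρ : Name → Name)

theorem Unwrap.traceRename {α β : Trace (Event Name) C} (h : Unwrap α β) :
    Unwrap (traceRename cr ρ α) (traceRename cr ρ β) := by
  obtain ⟨a, b, σ⟩ := h
  simpa [SDPaper.traceRename, tokRename, Function.comp_def] using
    Unwrap.step (a.map (tokRename cr ρ)) (b.map (tokRename cr ρ)) (σ.map (atomRename cr ρ))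

theorem Unwraps.traceRename {α β : Trace (Event Name) C} (h : Unwraps α β) :
    Unwraps (traceRename cr ρ α) (traceRename cr ρ β) :=
  h.lift (SDPaper.traceRename cr ρ) fun _ _ => Unwrap.traceRename cr ρ

variable {ent : C → C → Prop} {cr ρ}
  (ent_rename : ∀ c₁ c₂ : C, ent c₂ c₁ → ent (cr ρ c₂) (cr ρ c₁))
include ent_rename

theorem AtomSim.atomRename {a b : Atom (Event Name) C} (h : AtomSim ent a b) :
    AtomSim ent (atomRename cr ρ a) (atomRename cr ρ b) := by
  cases h with
  | evt e => exact AtomSim.evt _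
  | cnd h => exact AtomSim.cnd (ent_rename _ _ h)

theorem TokSim.tokRename {a b : Tok (Event Name) C} (h : TokSim ent a b) :
    TokSim ent (tokRename cr ρ a) (tokRename cr ρ b) := by
  cases h with
  | atom h => exact TokSim.atom (h.atomRename ent_rename)
  | crit h =>
    refine TokSim.crit ((seqSim_iff_embeds _ _ _).2 <|
      ((seqSim_iff_embeds _ _ _).1 h).map (atomRename cr ρ) (atomRename cr ρ)
        (fun h => h.atomRename ent_rename) ?_)
    rintro _ ⟨c, rfl⟩
    exact ⟨cr ρ c, rfl⟩

end Rename

theorem rename_preserves_traceSim_general {Name C : Type} (ent : C → C → Prop)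
    (cr : (Name → Name) → C → C) (ρ : Name → Name)
    (ent_rename : ∀ c₁ c₂ : C, ent c₂ c₁ → ent (cr ρ c₂) (cr ρ c₁))
    (t₁ t₂ : Trace (Event Name) C) (h : TraceSim ent t₁ t₂) :
    TraceSim ent (traceRename cr ρ t₁) (traceRename cr ρ t₂) := by
  obtain ⟨β, hβ, hembed⟩ := (traceSim_iff_embeds ent t₁ t₂).1 h
  refine (traceSim_iff_embeds ent _ _).2 ⟨traceRename cr ρ β, hβ.traceRename cr ρ, ?_⟩
  refine hembed.map (tokRename cr ρ) (tokRename cr ρ) (fun h => h.tokRename ent_rename) ?_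
  rintro _ ⟨c, rfl⟩
  exact ⟨cr ρ c, rfl⟩

/-- substitution preserves trace simulation: for all traces
`t₁, t₂` and every substitution `ρ : Name → Name`, if `t₁ ⋉ t₂` then
`ρ(t₁) ⋉ ρ(t₂)`, assuming the entailment relation on conditions (reflexive and
transitive) is preserved by substitution: `c₂ ⊨_c c₁` implies
`ρ(c₂) ⊨_c ρ(c₁)`. -/
theorem rename_preserves_traceSim {Name C : Type} (ent : C → C → Prop)
    (ent_refl : ∀ c : C, ent c c)
    (ent_trans : ∀ c₁ c₂ c₃ : C, ent c₁ c₂ → ent c₂ c₃ → ent c₁ c₃)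
    (cr : (Name → Name) → C → C) (ρ : Name → Name)
    (ent_rename : ∀ c₁ c₂ : C, ent c₂ c₁ → ent (cr ρ c₂) (cr ρ c₁))
    (t₁ t₂ : Trace (Event Name) C) (h : TraceSim ent t₁ t₂) :
    TraceSim ent (traceRename cr ρ t₁) (traceRename cr ρ t₂) :=
  rename_preserves_traceSim_general ent cr ρ ent_rename t₁ t₂ h

end SDPaper
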